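/- arXiv:2302.11500 — 2 statements merged into one kernel-verified Lean document; each statement's English description precedes it below -/
import Mathlib

section
/- Let $\mathcal{D}$ be a division ring containing the group ring $RG$ of a group $G$ over a ring $R$. Suppose $H \leq G$ is a subgroup, $c : G \to \mathcal{D}$ is a 1-cocycle (i.e. $c(gh) = c(g) + g\cdot c(h)$ for all $g,h \in G$, where $G$ acts on $\mathcal{D}$ by left multiplication via the embedding) that vanishes on $H$, and $g \in G$ satisfies $c(g) \neq 0$. Then the subgroup generated by $H$ and $g$ is isomorphic to the free product $H * \langle g \rangle$. -/
/-! On `K = ⟨g⟩` the cocycle is inner: commuting `x, y` satisfy `(x - 1) c y = (y - 1) c x`, so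
`c z = (z - 1) v` for `z ∈ K`, where `v = (g - 1)⁻¹ c g ≠ 0`. For an alternating word
`w = z₁ h₁ z₂ ⋯ hₖ₋₁ zₖ` (`zᵢ ∈ K`, `hᵢ ∈ H`) this gives `c w = B v` with
`B = ∑ xᵢ (zᵢ - 1) ∈ R[G]`, `xᵢ = z₁ h₁ ⋯ zᵢ₋₁ hᵢ₋₁`. If all letters are nontrivial, then by
induction on `k` the coefficient of `B` at `z₁` is `1`: any other contribution there would give a
shorter alternating word `w'` and some `h ∈ H` with `h₁ w' h = 1`, whence `c w' = c (h₁⁻¹) = 0`.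
So `c w ≠ 0`, and since every element of `H ∗ K` outside `H` maps to some `h w h'` with
`c (h w h') = h c w`, the map is injective. -/

namespace Monoid.Coprod

variable {M N : Type*} [Monoid M] [Monoid N]

def alternatingWord (n : N) : List (M × N) → M ∗ N
  | [] => inr n
  | (m, n') :: L => inr n * inl m * alternatingWord n' L

def IsReducedWord (n : N) (L : List (M × N)) : Prop :=
  n ≠ 1 ∧ ∀ p ∈ L, p.1 ≠ 1 ∧ p.2 ≠ 1

theorem IsReducedWord.cons {n n' : N} {m : M} {L : List (M × N)} (hn : n ≠ 1) (hm : m ≠ 1)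
    (hr : IsReducedWord n' L) : IsReducedWord n ((m, n') :: L) :=
  ⟨hn, by simpa [hm, hr.1] using hr.2⟩

theorem IsReducedWord.of_cons {n n' : N} {m : M} {L : List (M × N)}
    (hr : IsReducedWord n ((m, n') :: L)) : IsReducedWord n' L :=
  ⟨(hr.2 _ List.mem_cons_self).2, fun q hq => hr.2 q (List.mem_cons_of_mem _ hq)⟩

theorem IsReducedWord.left_ne_one {n n' : N} {m : M} {L : List (M × N)}
    (hr : IsReducedWord n ((m, n') :: L)) : m ≠ 1 :=
  (hr.2 _ List.mem_cons_self).1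

theorem inr_mul_alternatingWord (n n' : N) (L : List (M × N)) :
    inr n * alternatingWord n' L = alternatingWord (n * n') L := by
  cases L <;> simp [alternatingWord, mul_assoc]

theorem eq_inl_or_exists_isReducedWord (p : M ∗ N) :
    (∃ m, p = inl m) ∨
      ∃ m₀ n L m₁, IsReducedWord n L ∧ p = inl m₀ * alternatingWord n L * inl m₁ := by
  induction p using induction_on' with
  | one => exact .inl ⟨1, (map_one _).symm⟩
  | inl_mul m p ih =>
    rcases ih with ⟨m', rfl⟩ | ⟨m₀, n, L, m₁, hr, rfl⟩
    · exact .inl ⟨m * m', (map_mul _ _ _).symm⟩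
    · exact .inr ⟨m * m₀, n, L, m₁, hr, by simp [mul_assoc]⟩
  | inr_mul n p ih =>
    by_cases hn : n = 1
    · simpa [hn] using ih
    rcases ih with ⟨m', rfl⟩ | ⟨m₀, n', L, m₁, hr, rfl⟩
    · exact .inr ⟨1, n, [], m', ⟨hn, by simp⟩, by simp [alternatingWord]⟩
    by_cases hm₀ : m₀ = 1
    · subst hm₀
      by_cases hnn : n * n' = 1
      · cases L with
        | nil => exact .inl ⟨m₁, by simp [alternatingWord, ← mul_assoc, ← map_mul, hnn]⟩
        | cons p L =>
          refine .inr ⟨p.1, p.2, L, m₁, hr.of_cons, ?_⟩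
          simp [alternatingWord, ← mul_assoc, ← map_mul, hnn]
      · refine .inr ⟨1, n * n', L, m₁, ⟨hnn, hr.2⟩, ?_⟩
        simp [← mul_assoc, inr_mul_alternatingWord]
    · exact .inr ⟨1, n, (m₀, n') :: L, m₁, hr.cons hn hm₀, by simp [alternatingWord, mul_assoc]⟩

end Monoid.Coprod

open Monoid.Coprod MonoidAlgebra

section Cocycle

variable {R D G : Type*} [Ring R] [Ring D] [Group G] (f : R[G] →+* D) {c : G → D}
  (hc : ∀ x y : G, c (x * y) = c x + f (of R G x) * c y)
include hc

theorem cocycle_one : c 1 = 0 := by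
  have h := hc 1 1
  rwa [one_mul, map_one, map_one, one_mul, left_eq_add] at h

theorem cocycle_mul_of_right_eq_zero (x : G) {h : G} (hh : c h = 0) : c (x * h) = c x := by
  rw [hc, hh, mul_zero, add_zero]

theorem cocycle_mul_of_left_eq_zero {h : G} (hh : c h = 0) (x : G) :
    c (h * x) = f (of R G h) * c x := by
  rw [hc, hh, zero_add]

theorem sub_one_mul_cocycle_comm {x y : G} (hxy : Commute x y) :
    (f (of R G x) - 1) * c y = (f (of R G y) - 1) * c x := by
  have h := hc x y
  rw [hxy.eq, hc] at h
  rw [sub_mul, sub_mul, one_mul, one_mul, sub_eq_sub_iff_add_eq_add, add_comm, ← h, add_comm]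

end Cocycle

section DivisionRing

variable {R D G : Type*} [Ring R] [DivisionRing D] [Group G] (f : R[G] →+* D)

theorem map_of_sub_one_ne_zero [Nontrivial R] (hf : Function.Injective f) {g : G} (hg : g ≠ 1) :
    f (of R G g) - 1 ≠ 0 := by
  rw [sub_ne_zero, ← map_one f, ← map_one (of R G)]
  exact fun h => hg (of_injective (hf h))

theorem cocycle_eq_of_commute {c : G → D}
    (hc : ∀ x y : G, c (x * y) = c x + f (of R G x) * c y) {g z : G}
    (hg : f (of R G g) - 1 ≠ 0) (hgz : Commute g z) :
    c z = f (of R G z - 1) * ((f (of R G g) - 1)⁻¹ * c g) := by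
  have hcomm : Commute (f (of R G z) - 1) (f (of R G g) - 1) :=
    (((hgz.symm.map (of R G)).map f).sub_left (.one_left _)).sub_right (.one_right _)
  calc c z = (f (of R G g) - 1)⁻¹ * ((f (of R G g) - 1) * c z) := by
        rw [inv_mul_cancel_left₀ hg]
    _ = (f (of R G g) - 1)⁻¹ * ((f (of R G z) - 1) * c g) := by
        rw [sub_one_mul_cocycle_comm f hc hgz]
    _ = _ := by rw [map_sub, map_one, ← mul_assoc, ← mul_assoc, hcomm.inv_right₀.eq]

end DivisionRing

section WordCocycle

variable {R D G : Type*} [Ring R] [Ring D] [Group G] {H K : Subgroup G}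

noncomputable def wordCocycle (R : Type*) [Ring R] : K → List (H × K) → R[G]
  | z, [] => of R G z - 1
  | z, (h, z') :: L => of R G z - 1 + of R G (z * h) * wordCocycle R z' L

theorem eq_one_or_exists_of_coeff_wordCocycle_ne_zero {z : K} {L : List (H × K)}
    (hr : IsReducedWord z L) {x : G} (hx : (wordCocycle R z L).coeff x ≠ 0) :
    x = 1 ∨ ∃ (z' : K) (L' : List (H × K)) (h : H), L'.length ≤ L.length ∧
      IsReducedWord z' L' ∧ x = lift H.subtype K.subtype (alternatingWord z' L') * h := by
  induction L generalizing z x with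
  | nil =>
    refine or_iff_not_imp_left.2 fun hx1 => ⟨z, [], 1, le_rfl, hr, ?_⟩
    by_contra hxz
    apply hx
    simp_all [wordCocycle, one_def, alternatingWord, eq_comm]
  | cons p L ih =>
    refine or_iff_not_imp_left.2 fun hx1 => ?_
    have hz : IsReducedWord z ([] : List (H × K)) := ⟨hr.1, by simp⟩
    by_cases hxz : x = z
    · exact ⟨z, [], 1, by simp, hz, by simp [alternatingWord, hxz]⟩
    have hx' : (wordCocycle R p.2 L).coeff ((z * p.1 : G)⁻¹ * x) ≠ 0 := by
      simpa [wordCocycle, one_def, Finsupp.single_apply, Ne.symm hx1, Ne.symm hxz] using hx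
    rcases ih hr.of_cons hx' with hx'1 | ⟨z', L', h, hlen, hr', hx''⟩
    · exact ⟨z, [], p.1, by simp, hz, by simp [alternatingWord, ← inv_mul_eq_one.1 hx'1]⟩
    · refine ⟨z, (p.1, z') :: L', h, by simpa using hlen, hr'.cons hr.1 hr.left_ne_one, ?_⟩
      rw [inv_mul_eq_iff_eq_mul] at hx''
      simp [alternatingWord, hx'', mul_assoc]

variable (f : R[G] →+* D) {c : G → D} (hc : ∀ x y : G, c (x * y) = c x + f (of R G x) * c y)
  (hH : ∀ h ∈ H, c h = 0) {v : D} (hK : ∀ z ∈ K, c z = f (of R G z - 1) * v)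
include hc hH hK

theorem cocycle_lift_alternatingWord (z : K) (L : List (H × K)) :
    c (lift H.subtype K.subtype (alternatingWord z L)) = f (wordCocycle R z L) * v := by
  induction L generalizing z with
  | nil => simpa [alternatingWord, wordCocycle] using hK z z.2
  | cons p L ih =>
    simp only [alternatingWord, wordCocycle, map_mul, lift_apply_inl, lift_apply_inr,
      Subgroup.subtype_apply]
    rw [hc, hc, hK z z.2, hH p.1 p.1.2, ih, map_add, add_mul]
    simp only [map_mul, mul_assoc, mul_zero, add_zero]

theorem cocycle_lift_alternatingWord_ne_zero [Nontrivial R] (hv : ∀ a, f a * v = 0 → a = 0)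
    {z : K} {L : List (H × K)} (hr : IsReducedWord z L) :
    c (lift H.subtype K.subtype (alternatingWord z L)) ≠ 0 := by
  induction hlen : L.length using Nat.strong_induction_on generalizing z L with
  | _ n ih =>
  rw [cocycle_lift_alternatingWord f hc hH hK]
  intro h0
  have hz : (z : G) ≠ 1 := by simpa using hr.1
  have hcoeff : (wordCocycle R z L).coeff z = 1 := by
    cases L with
    | nil => simp [wordCocycle, one_def, hr.1]
    | cons p L =>
      have hp : (wordCocycle R p.2 L).coeff (p.1 : G)⁻¹ = 0 := by
        by_contra hne
        rcases eq_one_or_exists_of_coeff_wordCocycle_ne_zero hr.of_cons hne with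
          h1 | ⟨z', L', h, hlen', hr', hx⟩
        · exact hr.left_ne_one (by simpa using h1)
        · refine ih L'.length (by simp at hlen; omega) hr' rfl ?_
          rw [← cocycle_mul_of_right_eq_zero f hc _ (hH h h.2), ← hx, hH _ (inv_mem p.1.2)]
      simp [wordCocycle, one_def, hp, Finsupp.single_eq_of_ne hz]
  simp [hv _ h0] at hcoeff

theorem lift_injective_of_cocycle [Nontrivial R] (hv : ∀ a, f a * v = 0 → a = 0) :
    Function.Injective (lift H.subtype K.subtype) := by
  refine (injective_iff_map_eq_one _).2 fun p hp => ?_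
  rcases eq_inl_or_exists_isReducedWord p with ⟨m, rfl⟩ | ⟨m₀, z, L, m₁, hr, rfl⟩
  · obtain rfl : m = 1 := by simpa using hp
    exact map_one _
  · have hunit : IsUnit (f (of R G m₀)) :=
      (Group.isUnit (m₀ : G)).map (f.toMonoidHom.comp (of R G))
    simp only [map_mul, lift_apply_inl, Subgroup.subtype_apply] at hp
    have hcp := congrArg c hp
    rw [cocycle_mul_of_right_eq_zero f hc _ (hH _ m₁.2),
      cocycle_mul_of_left_eq_zero f hc (hH _ m₀.2), cocycle_one f hc,
      hunit.mul_right_eq_zero] at hcp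
    exact absurd hcp (cocycle_lift_alternatingWord_ne_zero f hc hH hK hv hr)

end WordCocycle

/-- Peterson–Thom lemma: if `R[G]` embeds in a division ring `D`, `c : G → D` is a
1-cocycle (for the left-multiplication action of `G` on `D` via the embedding) vanishing
on a subgroup `H`, and `c g ≠ 0`, then `H` and `⟨g⟩` generate their free product inside `G`:
the canonical map `H ∗ ⟨g⟩ → G` is injective. -/
theorem stmt_1 {R D G : Type*} [Ring R] [Nontrivial R] [DivisionRing D] [Group G]
    (f : MonoidAlgebra R G →+* D) (hf : Function.Injective f)
    (c : G → D)
    (hc : ∀ x y : G, c (x * y) = c x + f (MonoidAlgebra.of R G x) * c y)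
    (H : Subgroup G) (hH : ∀ h ∈ H, c h = 0)
    (g : G) (hg : c g ≠ 0) :
    Function.Injective
      (Monoid.Coprod.lift H.subtype (Subgroup.zpowers g).subtype) := by
  have hu : f (of R G g) - 1 ≠ 0 :=
    map_of_sub_one_ne_zero f hf (ne_of_apply_ne c (by rwa [cocycle_one f hc]))
  refine lift_injective_of_cocycle f hc hH (v := (f (of R G g) - 1)⁻¹ * c g) (fun z hz => ?_)
    fun a ha => (map_eq_zero_iff f hf).1
      ((mul_eq_zero.1 ha).resolve_right (mul_ne_zero (inv_ne_zero hu) hg))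
  obtain ⟨n, rfl⟩ := Subgroup.mem_zpowers_iff.mp hz
  exact cocycle_eq_of_commute f hc hu ((Commute.refl g).zpow_right n)
end

section
/- Let $G$ be a group that is locally indicable. Then the free product $G * H$ of two locally indicable groups $G$ and $H$ is locally indicable. -/
/-- A group is locally indicable if every nontrivial finitely generated subgroup
surjects onto `ℤ`. -/
def LocallyIndicable (G : Type*) [Group G] : Prop :=
  ∀ H : Subgroup G, H ≠ ⊥ → Group.FG H →
    ∃ f : H →* Multiplicative ℤ, Function.Surjective f

/-!
If a finitely generated subgroup `K ≤ G ∗ H` has nontrivial image in `G` or in `H`, that image is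
finitely generated, hence maps onto `ℤ`, and so does `K`. Otherwise `K` lies in the kernel of
`G ∗ H → G × H`. The commutators `⁅g, h⁆` with `g ≠ 1 ≠ h` generate a normal subgroup modulo
which `G` and `H` commute, so they generate this kernel; and they are a free basis of it by
ping-pong on reduced words: `⁅g, h⁆` sends every word not beginning with `h g` to one beginning
with `g h`. So `K` is a nontrivial subgroup of a free group, free by Nielsen–Schreier, and maps
onto `ℤ`.
-/

open Function
open scoped commutatorElement

namespace FreeGroup

variable {ι G α : Type*} [Group G] [MulAction G α] {a : ι → G} {X : ι × Bool → Set α} {x₀ : α}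

/- `X (i, true)` and `X (i, false)` are the ping-pong sets of `a i` and `(a i)⁻¹`. A base point
outside all of them replaces the usual requirement of at least two generators. -/

theorem lift_mk_smul_mem_of_isReduced (hdisj : Pairwise (Disjoint on X)) (hx₀ : ∀ q, x₀ ∉ X q)
    (hpp : ∀ q x, x ∉ X (q.1, !q.2) → lift a (mk [q]) • x ∈ X q) :
    ∀ (q : ι × Bool) (L : List (ι × Bool)), IsReduced (q :: L) →
      lift a (mk (q :: L)) • x₀ ∈ X q
  | q, [], _ => hpp q x₀ (hx₀ _)
  | q, r :: L, hL => by
    rw [isReduced_cons_cons] at hL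
    have hr := lift_mk_smul_mem_of_isReduced hdisj hx₀ hpp r L hL.2
    rw [← List.singleton_append, ← mul_mk, _root_.map_mul, mul_smul]
    refine hpp q _ fun hq => ?_
    obtain rfl : r = (q.1, !q.2) := hdisj.eq (Set.not_disjoint_iff.2 ⟨_, hr, hq⟩)
    simp at hL

theorem injective_lift_of_ping_pong_of_notMem (hdisj : Pairwise (Disjoint on X))
    (hx₀ : ∀ q, x₀ ∉ X q) (hpos : ∀ i x, x ∉ X (i, false) → a i • x ∈ X (i, true))
    (hneg : ∀ i x, x ∉ X (i, true) → (a i)⁻¹ • x ∈ X (i, false)) :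
    Injective (lift a) := by
  classical
  have hpp : ∀ q x, x ∉ X (q.1, !q.2) → lift a (mk [q]) • x ∈ X q := by
    rintro ⟨i, _ | _⟩ x hx
    · simpa [lift_mk] using hneg i x hx
    · simpa [lift_mk] using hpos i x hx
  refine (injective_iff_map_eq_one _).2 fun w hw => ?_
  by_contra hne
  obtain ⟨q, L, hL⟩ := List.exists_cons_of_ne_nil (mt toWord_eq_nil_iff.1 hne)
  have hmem := lift_mk_smul_mem_of_isReduced hdisj hx₀ hpp q L (hL ▸ isReduced_toWord)
  rw [← hL, mk_toWord, hw, one_smul] at hmem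
  exact hx₀ q hmem

end FreeGroup

namespace Monoid.CoprodI.Word

variable {ι : Type*} {M : ι → Type*} [∀ i, Group (M i)] [DecidableEq ι] [∀ i, DecidableEq (M i)]

theorem fstIdx_of_smul {i : ι} {x : M i} {w : Word M} (h : x * (equivPair i w).head ≠ 1) :
    fstIdx (of x • w) = some i := by
  rw [of_smul_def, rcons, dif_neg h, fstIdx_cons]

theorem toList_of_smul {i : ι} {x : M i} {w : Word M} (hw : fstIdx w ≠ some i) (hx : x ≠ 1) :
    (of x • w).toList = ⟨i, x⟩ :: w.toList := by
  rw [← cons_eq_smul (h1 := hw) (h2 := hx), cons_toList]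

theorem prefix_toList_commutator_smul {i j : ι} (hij : i ≠ j) {g : M i} {h : M j} (hg : g ≠ 1)
    (hh : h ≠ 1) {w : Word M} (hw : ¬[⟨j, h⟩, ⟨i, g⟩] <+: w.toList) :
    [⟨i, g⟩, ⟨j, h⟩] <+: (⁅of g, of h⁆ • w).toList := by
  set v := (of h)⁻¹ • w with hv
  have hu : fstIdx ((of g)⁻¹ • v) = some i := by
    rw [← map_inv]
    -- `g⁻¹` cancels only against a leading `g` of `v`, and then `w = of h • v` begins with `h g`
    refine fstIdx_of_smul fun hcancel => hw ?_
    have hhead : (equivPair i v).head = g := (inv_mul_eq_one.1 hcancel).symm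
    have hvg : v = of g • (equivPair i v).tail := by
      rw [← hhead, equivPair_head_smul_equivPair_tail]
    have hvl := congrArg toList hvg
    rw [toList_of_smul (equivPair i v).fstIdx_ne hg] at hvl
    have hvj : fstIdx v ≠ some j := by
      simp [fstIdx, hvl, hij]
    rw [← smul_inv_smul (of h) w, ← hv, toList_of_smul hvj hh, hvl]
    exact ⟨_, rfl⟩
  have hgh : ⁅of g, of h⁆ • w = of g • of h • (of g)⁻¹ • v := by
    simp only [hv, commutatorElement_def, mul_smul]
  have hhu : (of h • (of g)⁻¹ • v).toList = ⟨j, h⟩ :: ((of g)⁻¹ • v).toList :=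
    toList_of_smul (by rw [hu]; simpa using hij) hh
  rw [hgh, toList_of_smul (by simp [fstIdx, hhu, hij.symm]) hg, hhu]
  exact ⟨_, rfl⟩

end Monoid.CoprodI.Word

namespace Monoid.CoprodI

variable {ι κ : Type*} {M : ι → Type*} [∀ i, Group (M i)]

theorem injective_lift_commutator {i j : ι} (hij : i ≠ j) {g : κ → M i} {h : κ → M j}
    (hg : ∀ k, g k ≠ 1) (hh : ∀ k, h k ≠ 1) (hgh : Injective fun k => (g k, h k)) :
    Injective (FreeGroup.lift fun k => ⁅of (g k), of (h k)⁆) := by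
  classical
  let lead : κ × Bool → List (Σ i, M i) := fun q =>
    cond q.2 [⟨i, g q.1⟩, ⟨j, h q.1⟩] [⟨j, h q.1⟩, ⟨i, g q.1⟩]
  have length_lead (q) : (lead q).length = 2 := by obtain ⟨k, _ | _⟩ := q <;> rfl
  have lead_injective : Injective lead := by
    rintro ⟨k, _ | _⟩ ⟨k', _ | _⟩ hkk' <;> simp_all [lead, ← hgh.eq_iff]
  refine FreeGroup.injective_lift_of_ping_pong_of_notMem
    (X := fun q => {w : Word M | lead q <+: w.toList}) (x₀ := Word.empty) ?_ ?_ ?_ ?_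
  · intro q q' hqq'
    refine Set.disjoint_left.2 fun w hq hq' => hqq' (lead_injective ?_)
    exact (List.prefix_of_prefix_length_le hq hq' (by rw [length_lead, length_lead])).eq_of_length
      (by rw [length_lead, length_lead])
  · intro q
    simp [List.prefix_nil, ← List.length_eq_zero_iff, length_lead]
  · exact fun k w hw => Word.prefix_toList_commutator_smul hij (hg k) (hh k) hw
  · intro k w hw
    rw [commutatorElement_inv]
    exact Word.prefix_toList_commutator_smul hij.symm (hh k) (hg k) hw

end Monoid.CoprodI

universe u v

namespace Monoid.Coprod

variable {G : Type u} {H : Type v} [Group G] [Group H]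

/- `G ∗ H` is compared with the indexed free product of this family, whose reduced words serve as
normal forms; the `ULift`s put `G` and `H` in a common universe. -/
variable (G H) in
def boolFamily : Bool → Type max u v
  | true => ULift.{v} G
  | false => ULift.{u} H

instance : ∀ b, Group (boolFamily G H b)
  | true => inferInstanceAs (Group (ULift G))
  | false => inferInstanceAs (Group (ULift H))

def toCoprodI : G ∗ H →* CoprodI (boolFamily G H) :=
  lift ((CoprodI.of (i := true)).comp MulEquiv.ulift.symm.toMonoidHom)
    ((CoprodI.of (i := false)).comp MulEquiv.ulift.symm.toMonoidHom)

variable (G H) in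
def commutatorBasis : {g : G // g ≠ 1} × {h : H // h ≠ 1} → G ∗ H :=
  fun p => ⁅(inl p.1.1 : G ∗ H), inr p.2.1⁆

theorem injective_lift_commutatorBasis : Injective (FreeGroup.lift (commutatorBasis G H)) := by
  have key := CoprodI.injective_lift_commutator (M := boolFamily G H) (i := true) (j := false)
    (by decide)
    (g := fun p : {g : G // g ≠ 1} × {h : H // h ≠ 1} => (ULift.up p.1.1 : ULift G))
    (h := fun p => (ULift.up p.2.1 : ULift H)) (fun p => ULift.up_injective.ne p.1.2)
    (fun p => ULift.up_injective.ne p.2.2) fun p q hpq =>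
      Prod.ext (Subtype.ext (congrArg ULift.down (Prod.ext_iff.1 hpq).1))
        (Subtype.ext (congrArg ULift.down (Prod.ext_iff.1 hpq).2))
  have hcomp : toCoprodI.comp (FreeGroup.lift (commutatorBasis G H)) = FreeGroup.lift _ :=
    FreeGroup.ext_hom _ _ fun p => by
      simp only [commutatorBasis, toCoprodI, MonoidHom.coe_comp, comp_apply,
        FreeGroup.lift_apply_of, map_commutatorElement, lift_apply_inl, lift_apply_inr]
      rfl
  refine Injective.of_comp (f := toCoprodI) ?_
  rwa [← MonoidHom.coe_comp, hcomp]

theorem ker_toProd_le {N : Subgroup (G ∗ H)} [N.Normal]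
    (hN : ∀ g h, ⁅(inl g : G ∗ H), inr h⁆ ∈ N) : (toProd : G ∗ H →* G × H).ker ≤ N := by
  intro x hx
  have hcomm (g : G) (h : H) :
      Commute ((QuotientGroup.mk' N).comp inl g) ((QuotientGroup.mk' N).comp inr h) := by
    rw [← commutatorElement_eq_one_iff_commute, MonoidHom.comp_apply, MonoidHom.comp_apply,
      ← map_commutatorElement, QuotientGroup.mk'_apply, QuotientGroup.eq_one_iff]
    exact hN g h
  have hfac : (MonoidHom.noncommCoprod _ _ hcomm).comp toProd = QuotientGroup.mk' N := by
    ext <;> simp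
  rw [← QuotientGroup.eq_one_iff, ← QuotientGroup.mk'_apply, ← hfac, MonoidHom.comp_apply,
    MonoidHom.mem_ker.1 hx, map_one]

theorem commutator_mem_range_lift_commutatorBasis (g : G) (h : H) :
    ⁅(inl g : G ∗ H), inr h⁆ ∈ (FreeGroup.lift (commutatorBasis G H)).range := by
  by_cases hg : g = 1
  · simp [hg]
  by_cases hh : h = 1
  · simp [hh]
  exact ⟨FreeGroup.of (⟨g, hg⟩, ⟨h, hh⟩), FreeGroup.lift_apply_of⟩

instance normal_range_lift_commutatorBasis :
    (FreeGroup.lift (commutatorBasis G H)).range.Normal := by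
  have hmem := commutator_mem_range_lift_commutatorBasis (G := G) (H := H)
  rw [← Subgroup.normalizer_eq_top_iff, eq_top_iff, ← range_inl_sup_range_inr, sup_le_iff,
    FreeGroup.range_lift_eq_closure, Subgroup.le_normalizer_closure_iff,
    Subgroup.le_normalizer_closure_iff, ← FreeGroup.range_lift_eq_closure]
  constructor
  · rintro _ ⟨a, rfl⟩ _ ⟨⟨⟨g, -⟩, ⟨h, -⟩⟩, rfl⟩
    have hconj : (inl a : G ∗ H) * ⁅(inl g : G ∗ H), inr h⁆ * (inl a)⁻¹ =
        ⁅(inl (a * g) : G ∗ H), inr h⁆ * ⁅(inl a : G ∗ H), inr h⁆⁻¹ := by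
      simp only [commutatorElement_def, map_mul]; group
    exact hconj ▸ mul_mem (hmem _ _) (inv_mem (hmem _ _))
  · rintro _ ⟨b, rfl⟩ _ ⟨⟨⟨g, -⟩, ⟨h, -⟩⟩, rfl⟩
    have hconj : (inr b : G ∗ H) * ⁅(inl g : G ∗ H), inr h⁆ * (inr b)⁻¹ =
        ⁅(inl g : G ∗ H), inr b⁆⁻¹ * ⁅(inl g : G ∗ H), inr (b * h)⁆ := by
      simp only [commutatorElement_def, map_mul]; group
    exact hconj ▸ mul_mem (inv_mem (hmem _ _)) (hmem _ _)

end Monoid.Coprod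

theorem LocallyIndicable.exists_surjective_of_map_ne_bot {Γ G : Type*} [Group Γ] [Group G]
    (hG : LocallyIndicable G) (f : Γ →* G) {K : Subgroup Γ} (hK : Group.FG K)
    (hfK : K.map f ≠ ⊥) : ∃ φ : K →* Multiplicative ℤ, Surjective φ := by
  obtain ⟨φ, hφ⟩ := hG _ hfK (Group.fg_of_surjective (f.subgroupMap_surjective K))
  exact ⟨φ.comp (f.subgroupMap K), hφ.comp (f.subgroupMap_surjective K)⟩

theorem IsFreeGroup.exists_surjective_multiplicative_int (F : Type*) [Group F] [IsFreeGroup F]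
    [Nontrivial F] : ∃ φ : F →* Multiplicative ℤ, Surjective φ := by
  obtain ⟨x₀⟩ : Nonempty (Generators F) := by
    by_contra! h
    exact not_subsingleton F (toFreeGroup F).toEquiv.subsingleton
  refine ⟨lift fun _ => Multiplicative.ofAdd 1, fun m => ⟨of x₀ ^ m.toAdd, ?_⟩⟩
  rw [map_zpow, lift_of, ← ofAdd_zsmul, smul_eq_mul, mul_one, ofAdd_toAdd]

theorem exists_surjective_of_le_range {F Γ : Type*} [Group F] [IsFreeGroup F] [Group Γ]
    {ψ : F →* Γ} (hψ : Injective ψ) {K : Subgroup Γ} (hKψ : K ≤ ψ.range) (hK : K ≠ ⊥) :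
    ∃ φ : K →* Multiplicative ℤ, Surjective φ := by
  let e : K.comap ψ ≃* K :=
    (Subgroup.equivMapOfInjective _ ψ hψ).trans
      (MulEquiv.subgroupCongr (Subgroup.map_comap_eq_self hKψ))
  have : Nontrivial K := (Subgroup.nontrivial_iff_ne_bot K).2 hK
  have : Nontrivial (K.comap ψ) := e.toEquiv.nontrivial
  obtain ⟨φ, hφ⟩ := IsFreeGroup.exists_surjective_multiplicative_int (K.comap ψ)
  exact ⟨φ.comp e.symm.toMonoidHom, hφ.comp e.symm.surjective⟩

/-- The free product of two locally indicable groups is locally indicable. -/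
theorem stmt_13 {G H : Type*} [Group G] [Group H]
    (hG : LocallyIndicable G) (hH : LocallyIndicable H) :
    LocallyIndicable (Monoid.Coprod G H) := by
  intro K hK hfg
  by_cases hKG : K.map Monoid.Coprod.fst = ⊥
  · by_cases hKH : K.map Monoid.Coprod.snd = ⊥
    · refine exists_surjective_of_le_range Monoid.Coprod.injective_lift_commutatorBasis ?_ hK
      rw [Subgroup.map_eq_bot_iff] at hKG hKH
      calc K ≤ Monoid.Coprod.fst.ker ⊓ Monoid.Coprod.snd.ker := le_inf hKG hKH
        _ = Monoid.Coprod.toProd.ker := by rw [← Monoid.Coprod.fst_prod_snd, MonoidHom.ker_prod]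
        _ ≤ _ := Monoid.Coprod.ker_toProd_le Monoid.Coprod.commutator_mem_range_lift_commutatorBasis
    · exact hH.exists_surjective_of_map_ne_bot Monoid.Coprod.snd hfg hKH
  · exact hG.exists_surjective_of_map_ne_bot Monoid.Coprod.fst hfg hKG
end
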